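/- arXiv:2012.14174 — 6 statements merged into one kernel-verified Lean document; each statement's English description precedes it below -/
import Mathlib

section
/- For any two disjoint nonempty subsets S, T ⊆ V of a multigraph G, the MM (S,T)-cut is unique: if (V1, V2) and (V1', V2') are both minimum (S,T)-cuts such that |V1| and |V1'| each equal the maximum of |U| over all minimum (S,T)-cuts (U, V∖U), then V1 = V1'. -/
open Finset

variable {V : Type*} [Fintype V] [DecidableEq V]

/-- Cut-size of the cut `(V1, V ∖ V1)`. -/
def cutSize (w : V → V → ℕ) (V1 : Finset V) : ℕ :=
  ∑ u ∈ V1, ∑ v ∈ V1ᶜ, w u v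

/-- Boundary `δ(X)`: unordered pairs `{u,v}` with `u ∈ X`, `v ∉ X`, `w u v > 0`. -/
def bdry (w : V → V → ℕ) (X : Finset V) : Set (Sym2 V) :=
  {e | ∃ u v, e = s(u, v) ∧ u ∈ X ∧ v ∉ X ∧ 0 < w u v}

/-- `(A,B)`-cut, represented by its first part `V1` (the second part is `V1ᶜ`). -/
def IsCut (A B V1 : Finset V) : Prop := A ⊆ V1 ∧ B ⊆ V1ᶜ

/-- Minimal `(A,B)`-cut. -/
def IsMinimalCut (w : V → V → ℕ) (A B V1 : Finset V) : Prop :=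
  IsCut A B V1 ∧
  (¬ ∃ V1' : Finset V, A ⊆ V1' ∧ V1' ⊂ V1 ∧ bdry w V1' ⊆ bdry w V1) ∧
  (¬ ∃ V2' : Finset V, B ⊆ V2' ∧ V2' ⊂ V1ᶜ ∧ bdry w V2' ⊆ bdry w V1)

/-- Minimum `(A,B)`-cut. -/
def IsMinCut (w : V → V → ℕ) (A B V1 : Finset V) : Prop :=
  IsCut A B V1 ∧ ∀ U : Finset V, IsCut A B U → cutSize w V1 ≤ cutSize w U

/-- MM `(A,B)`-cut: minimum cut with `|V1|` maximum among minimum cuts. -/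
def IsMMCut (w : V → V → ℕ) (A B V1 : Finset V) : Prop :=
  IsMinCut w A B V1 ∧ ∀ U : Finset V, IsMinCut w A B U → U.card ≤ V1.card

/-- Important `(A,B)`-cut. -/
def IsImportantCut (w : V → V → ℕ) (A B V1 : Finset V) : Prop :=
  IsMinimalCut w A B V1 ∧
  ¬ ∃ X' : Finset V, IsCut A B X' ∧ V1 ⊂ X' ∧ cutSize w X' ≤ cutSize w V1

/-- Degree of a vertex. -/
def deg (w : V → V → ℕ) (v : V) : ℕ := ∑ u, w v u

/-- `deg(v; X)`: degree of `v` towards `X ∖ {v}`. -/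
def degIn (w : V → V → ℕ) (v : V) (X : Finset V) : ℕ :=
  ∑ u ∈ X.erase v, w v u

/-- Neighborhood `N(X)`. -/
def nbhd (w : V → V → ℕ) (X : Finset V) : Finset V :=
  Finset.univ.filter (fun u => u ∉ X ∧ ∃ x ∈ X, 0 < w u x)

/-- Feasible `(A,B)`-cut for the bounded-degree cut instance `(G,A,B,uA,uB,k)`. -/
def FeasibleCut (w : V → V → ℕ) (uA uB : V → ℕ) (k : ℕ) (A B VA : Finset V) : Prop :=
  IsMinimalCut w A B VA ∧ cutSize w VA ≤ k ∧
  (∀ v ∈ VA, degIn w v VA ≤ uA v) ∧ (∀ v ∈ VAᶜ, degIn w v VAᶜ ≤ uB v)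

/-- Feasibility of the instance `(G,A,B,uA,uB,k)`. -/
def Feasible (w : V → V → ℕ) (uA uB : V → ℕ) (k : ℕ) (A B : Finset V) : Prop :=
  ∃ VA : Finset V, FeasibleCut w uA uB k A B VA

/-- Unsatisfied vertices w.r.t. an upper-bound function `u` : `{v : deg(v) > u v}`. -/
def unsat (w : V → V → ℕ) (u : V → ℕ) : Finset V :=
  Finset.univ.filter (fun v => u v < deg w v)

/-- Easy instance. -/
def EasyInstance (w : V → V → ℕ) (uA uB : V → ℕ) (A B : Finset V) : Prop :=
  unsat w uA ∪ unsat w uB ⊆ A ∪ B ∧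
  nbhd w (unsat w uA ∩ A) ⊆ A ∪ B ∧
  nbhd w (unsat w uB ∩ B) ⊆ A ∪ B

/-- `A_π` for the cut `π = (V1, V1ᶜ)`. -/
def Api (w : V → V → ℕ) (uA uB : V → ℕ) (A V1 : Finset V) : Finset V :=
  A ∪ (unsat w uA ∩ V1) ∪ (unsat w uB ∩ V1) ∪
    (nbhd w (unsat w uA ∩ V1) ∩ V1) ∪ (nbhd w (unsat w uB ∩ V1ᶜ) ∩ V1)

/-- `B_π` for the cut `π = (V1, V1ᶜ)`. -/
def Bpi (w : V → V → ℕ) (uA uB : V → ℕ) (B V1 : Finset V) : Finset V :=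
  B ∪ (unsat w uA ∩ V1ᶜ) ∪ (unsat w uB ∩ V1ᶜ) ∪
    (nbhd w (unsat w uA ∩ V1) ∩ V1ᶜ) ∪ (nbhd w (unsat w uB ∩ V1ᶜ) ∩ V1ᶜ)

lemma cutSize_eq_double_sum (w : V → V → ℕ) (X : Finset V) :
    cutSize w X = ∑ u, ∑ v, if u ∈ X ∧ v ∉ X then w u v else 0 := by
  unfold cutSize
  have h1 : ∀ u, (∑ v, if u ∈ X ∧ v ∉ X then w u v else 0)
      = if u ∈ X then ∑ v ∈ Xᶜ, w u v else 0 := by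
    intro u
    by_cases h : u ∈ X <;>
      simp [h, ← Finset.mem_compl, Finset.sum_ite_mem]
  simp [h1, Finset.sum_ite_mem]

lemma cutSize_submodular (w : V → V → ℕ) (X Y : Finset V) :
    cutSize w (X ∪ Y) + cutSize w (X ∩ Y) ≤ cutSize w X + cutSize w Y := by
  simp only [cutSize_eq_double_sum, ← Finset.sum_add_distrib]
  refine Finset.sum_le_sum fun u _ => Finset.sum_le_sum fun v _ => ?_
  by_cases hxu : u ∈ X <;> by_cases hyu : u ∈ Y <;>
    by_cases hxv : v ∈ X <;> by_cases hyv : v ∈ Y <;>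
    simp [hxu, hyu, hxv, hyv]

/-- the MM `(S,T)`-cut is unique. -/
theorem mm_cut_unique (w : V → V → ℕ)
    (hsymm : ∀ u v, w u v = w v u) (hloop : ∀ v, w v v = 0)
    (S T : Finset V) (hS : S.Nonempty) (hT : T.Nonempty) (hST : Disjoint S T)
    (V1 V1' : Finset V) (h1 : IsMMCut w S T V1) (h2 : IsMMCut w S T V1') :
    V1 = V1' := by
  obtain ⟨⟨⟨hS1, hT1⟩, hmin1⟩, hmax1⟩ := h1
  obtain ⟨⟨⟨hS2, hT2⟩, hmin2⟩, hmax2⟩ := h2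
  have hcutU : IsCut S T (V1 ∪ V1') := by
    refine ⟨hS1.trans Finset.subset_union_left, ?_⟩
    rw [Finset.compl_union]
    exact Finset.subset_inter hT1 hT2
  have hcutI : IsCut S T (V1 ∩ V1') := by
    refine ⟨Finset.subset_inter hS1 hS2, ?_⟩
    rw [Finset.compl_inter]
    exact hT1.trans Finset.subset_union_left
  have heq : cutSize w V1 = cutSize w V1' :=
    le_antisymm (hmin1 _ ⟨hS2, hT2⟩) (hmin2 _ ⟨hS1, hT1⟩)
  have hU := hmin1 _ hcutU
  have hI := hmin1 _ hcutI
  have hsub := cutSize_submodular w V1 V1'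
  have hUeq : cutSize w (V1 ∪ V1') = cutSize w V1 := by omega
  have hUmin : IsMinCut w S T (V1 ∪ V1') := by
    refine ⟨hcutU, fun U hU' => ?_⟩
    rw [hUeq]; exact hmin1 _ hU'
  have h1' : V1 = V1 ∪ V1' :=
    Finset.eq_of_subset_of_card_le Finset.subset_union_left (hmax1 _ hUmin)
  have h2' : V1' = V1 ∪ V1' :=
    Finset.eq_of_subset_of_card_le Finset.subset_union_right (hmax2 _ hUmin)
  exact h1'.trans h2'.symm
end

section
/- Let S, T ⊆ V be disjoint nonempty subsets of a multigraph G and let k ∈ ℕ. Then the number of sets X ⊆ V such that (X, V∖X) is an important (S,T)-cut of cut-size at most k is at most 4^k. -/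
open Finset

variable {V : Type*} [Fintype V] [DecidableEq V]

lemma cutSize_eq_sum (w : V → V → ℕ) (Y : Finset V) :
    cutSize w Y = ∑ a : V, ∑ b : V, (if a ∈ Y ∧ b ∉ Y then w a b else 0) := by
  unfold cutSize
  rw [Finset.sum_congr rfl (fun a (_ : a ∈ Y) => rfl)]
  have h1 : ∀ a : V, (∑ b : V, if a ∈ Y ∧ b ∉ Y then w a b else 0)
      = if a ∈ Y then (∑ v ∈ Yᶜ, w a v) else 0 := by
    intro a
    by_cases ha : a ∈ Y
    · simp only [ha, true_and, if_true]
      rw [← Finset.sum_filter]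
      apply Finset.sum_congr _ (fun _ _ => rfl)
      ext b; simp
    · simp [ha]
  rw [Finset.sum_congr rfl (fun a (_ : a ∈ (univ : Finset V)) => h1 a)]
  rw [Finset.sum_ite_mem, Finset.univ_inter]

lemma cutSize_submod (w : V → V → ℕ) (X R : Finset V) :
    cutSize w (X ∩ R) + cutSize w (X ∪ R) ≤ cutSize w X + cutSize w R := by
  simp only [cutSize_eq_sum]
  rw [← Finset.sum_add_distrib, ← Finset.sum_add_distrib]
  apply Finset.sum_le_sum
  intro a _
  rw [← Finset.sum_add_distrib, ← Finset.sum_add_distrib]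
  apply Finset.sum_le_sum
  intro b _
  simp only [Finset.mem_inter, Finset.mem_union]
  by_cases haX : a ∈ X <;> by_cases haR : a ∈ R <;> by_cases hbX : b ∈ X <;>
    by_cases hbR : b ∈ R <;> simp [haX, haR, hbX, hbR]

lemma IsCut.inter {A B X R : Finset V} (hX : IsCut A B X) (hR : IsCut A B R) :
    IsCut A B (X ∩ R) :=
  ⟨Finset.subset_inter hX.1 hR.1, fun t ht => by
    simp only [Finset.mem_compl, Finset.mem_inter, not_and_or]
    exact Or.inl (Finset.mem_compl.mp (hX.2 ht))⟩

lemma IsCut.union {A B X R : Finset V} (hX : IsCut A B X) (hR : IsCut A B R) :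
    IsCut A B (X ∪ R) :=
  ⟨hX.1.trans Finset.subset_union_left, fun t ht => by
    simp only [Finset.mem_compl, Finset.mem_union, not_or]
    exact ⟨Finset.mem_compl.mp (hX.2 ht), Finset.mem_compl.mp (hR.2 ht)⟩⟩

noncomputable def lam (w : V → V → ℕ) (A B : Finset V) : ℕ :=
  sInf {c | ∃ U : Finset V, IsCut A B U ∧ cutSize w U = c}

lemma lam_le {w : V → V → ℕ} {A B U : Finset V} (h : IsCut A B U) :
    lam w A B ≤ cutSize w U :=
  Nat.sInf_le ⟨U, h, rfl⟩

lemma isCut_compl {A B : Finset V} (hAB : Disjoint A B) : IsCut A B Bᶜ :=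
  ⟨le_compl_iff_disjoint_right.mpr hAB, by rw [compl_compl]⟩

lemma exists_lam_cut {w : V → V → ℕ} {A B : Finset V} (hAB : Disjoint A B) :
    ∃ U : Finset V, IsCut A B U ∧ cutSize w U = lam w A B := by
  have hne : {c : ℕ | ∃ U : Finset V, IsCut A B U ∧ cutSize w U = c}.Nonempty :=
    ⟨cutSize w Bᶜ, Bᶜ, isCut_compl hAB, rfl⟩
  exact Nat.sInf_mem hne

lemma lam_lower {w : V → V → ℕ} {A B : Finset V} (hAB : Disjoint A B) {m : ℕ}
    (h : ∀ U : Finset V, IsCut A B U → m ≤ cutSize w U) : m ≤ lam w A B := by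
  obtain ⟨U, hU, hUs⟩ := exists_lam_cut (w := w) hAB
  exact hUs ▸ h U hU

/-- Existence of the maximum minimum cut `R`: a minimum cut containing every minimum cut. -/
lemma exists_MM (w : V → V → ℕ) {A B : Finset V} (hAB : Disjoint A B) :
    ∃ R : Finset V, IsCut A B R ∧ cutSize w R = lam w A B ∧
      ∀ U : Finset V, IsCut A B U → cutSize w U = lam w A B → U ⊆ R := by
  classical
  set MC : Finset (Finset V) :=
    Finset.univ.filter (fun U => (A ⊆ U ∧ B ⊆ Uᶜ) ∧ cutSize w U = lam w A B) with hMC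
  have hmem : ∀ U : Finset V, U ∈ MC ↔ IsCut A B U ∧ cutSize w U = lam w A B := by
    intro U; simp [hMC, IsCut]
  obtain ⟨U0, hU0, hU0s⟩ := exists_lam_cut (w := w) hAB
  have hne : MC.Nonempty := ⟨U0, (hmem U0).mpr ⟨hU0, hU0s⟩⟩
  obtain ⟨R, hR, hRmax⟩ := Finset.exists_max_image MC Finset.card hne
  obtain ⟨hRcut, hRs⟩ := (hmem R).mp hR
  refine ⟨R, hRcut, hRs, fun U hU hUs => ?_⟩
  have h1 : lam w A B ≤ cutSize w (U ∩ R) := lam_le (hU.inter hRcut)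
  have h2 : lam w A B ≤ cutSize w (U ∪ R) := lam_le (hU.union hRcut)
  have h3 := cutSize_submod w U R
  have h4 : cutSize w (U ∪ R) = lam w A B := by omega
  have h5 : U ∪ R ∈ MC := (hmem _).mpr ⟨hU.union hRcut, h4⟩
  have h6 : (U ∪ R).card ≤ R.card := hRmax _ h5
  have h7 : R = U ∪ R :=
    Finset.eq_of_subset_of_card_le Finset.subset_union_right h6
  exact fun x hx => h7 ▸ Finset.mem_union_left R hx

/-- Every important cut contains every minimum cut that is maximal... in fact every
important cut contains any MM cut `R`. Only importance is used. -/
lemma MM_subset_important {w : V → V → ℕ} {A B R X : Finset V}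
    (hRcut : IsCut A B R) (hRs : cutSize w R = lam w A B)
    (hX : IsImportantCut w A B X) : R ⊆ X := by
  by_contra hnot
  obtain ⟨⟨hXcut, _, _⟩, himp⟩ := hX
  have h1 : lam w A B ≤ cutSize w (X ∩ R) := lam_le (hXcut.inter hRcut)
  have h2 := cutSize_submod w X R
  have h3 : cutSize w (X ∪ R) ≤ cutSize w X := by omega
  have h4 : X ⊂ X ∪ R := by
    refine Finset.ssubset_iff_subset_ne.mpr ⟨Finset.subset_union_left, fun h => ?_⟩
    exact hnot (fun r hr => h ▸ Finset.mem_union_right X hr)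
  exact himp ⟨X ∪ R, hXcut.union hRcut, h4, h3⟩

lemma bdry_empty_of_cutSize_zero {w : V → V → ℕ} {Y : Finset V}
    (h : cutSize w Y = 0) : bdry w Y = ∅ := by
  ext e
  simp only [bdry, Set.mem_setOf_eq, Set.mem_empty_iff_false, iff_false]
  rintro ⟨u, v, -, hu, hv, hw⟩
  rw [cutSize_eq_sum] at h
  have := Finset.sum_eq_zero_iff.mp h u (Finset.mem_univ u)
  have := Finset.sum_eq_zero_iff.mp this v (Finset.mem_univ v)
  simp [hu, hv] at this
  omega

/-- If `lam = 0`, the only important cut is `R` itself (minimality rules out others). -/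
lemma important_eq_R_of_lam_zero {w : V → V → ℕ} {A B R X : Finset V}
    (hRcut : IsCut A B R) (hRs : cutSize w R = lam w A B) (hlam : lam w A B = 0)
    (hX : IsImportantCut w A B X) : X = R := by
  have hsub : R ⊆ X := MM_subset_important hRcut hRs hX
  by_contra hne
  have hss : R ⊂ X := Finset.ssubset_iff_subset_ne.mpr ⟨hsub, fun h => hne h.symm⟩
  have hbd : bdry w R = ∅ := bdry_empty_of_cutSize_zero (by omega)
  exact hX.1.2.1 ⟨R, hRcut.1, hss, by simp [hbd]⟩

section del

variable (w : V → V → ℕ) (u₀ v₀ : V)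

/-- The single deleted (multigraph) edge, as a weight function. -/
def dw : V → V → ℕ := fun a b => if (a = u₀ ∧ b = v₀) ∨ (a = v₀ ∧ b = u₀) then 1 else 0

/-- `w` with one copy of the edge `u₀v₀` deleted. -/
def delw : V → V → ℕ := fun a b => w a b - dw u₀ v₀ a b

variable {w u₀ v₀}

lemma delw_symm (hsymm : ∀ u v, w u v = w v u) :
    ∀ u v, delw w u₀ v₀ u v = delw w u₀ v₀ v u := by
  intro u v
  unfold delw dw
  rw [hsymm u v]
  congr 1
  by_cases h1 : u = u₀ <;> by_cases h2 : u = v₀ <;> by_cases h3 : v = u₀ <;>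
    by_cases h4 : v = v₀ <;> simp [h1, h2, h3, h4] <;> tauto

lemma delw_loop (hloop : ∀ v, w v v = 0) : ∀ v, delw w u₀ v₀ v v = 0 := by
  intro v; unfold delw; simp [hloop]

lemma w_eq_delw_add (hne : u₀ ≠ v₀) (hw : 0 < w u₀ v₀) (hsymm : ∀ u v, w u v = w v u) :
    ∀ a b, w a b = delw w u₀ v₀ a b + dw u₀ v₀ a b := by
  intro a b
  unfold delw dw
  by_cases h : (a = u₀ ∧ b = v₀) ∨ (a = v₀ ∧ b = u₀)
  · rcases h with ⟨ha, hb⟩ | ⟨ha, hb⟩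
    · rw [if_pos (Or.inl ⟨ha, hb⟩)]
      have hpos : 0 < w a b := by rw [ha, hb]; exact hw
      omega
    · rw [if_pos (Or.inr ⟨ha, hb⟩)]
      have hpos : 0 < w a b := by rw [ha, hb, hsymm]; exact hw
      omega
  · simp [h]

lemma cutSize_add_weights (w1 w2 : V → V → ℕ) (Y : Finset V) :
    cutSize (fun a b => w1 a b + w2 a b) Y = cutSize w1 Y + cutSize w2 Y := by
  unfold cutSize
  rw [← Finset.sum_add_distrib]
  exact Finset.sum_congr rfl fun a _ => by rw [← Finset.sum_add_distrib]

lemma cutSize_dw (hne : u₀ ≠ v₀) (Y : Finset V) :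
    cutSize (dw u₀ v₀) Y
      = (if u₀ ∈ Y ∧ v₀ ∉ Y then 1 else 0) + (if v₀ ∈ Y ∧ u₀ ∉ Y then 1 else 0) := by
  rw [cutSize_eq_sum]
  have key : ∀ a b : V, (if a ∈ Y ∧ b ∉ Y then dw u₀ v₀ a b else 0)
      = (if b = v₀ then if a = u₀ then (if u₀ ∈ Y ∧ v₀ ∉ Y then 1 else 0) else 0 else 0)
        + (if b = u₀ then if a = v₀ then (if v₀ ∈ Y ∧ u₀ ∉ Y then 1 else 0) else 0 else 0) := by
    intro a b
    unfold dw
    by_cases h1 : a = u₀ <;> by_cases h2 : a = v₀ <;> by_cases h3 : b = u₀ <;>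
      by_cases h4 : b = v₀ <;>
      simp_all <;> omega
  simp only [key, Finset.sum_add_distrib]
  simp [Finset.sum_ite_eq']

lemma cutSize_delw_le (hne : u₀ ≠ v₀) (hw : 0 < w u₀ v₀) (hsymm : ∀ u v, w u v = w v u)
    (Y : Finset V) : cutSize w Y ≤ cutSize (delw w u₀ v₀) Y + 1 := by
  have h1 : cutSize w Y = cutSize (delw w u₀ v₀) Y + cutSize (dw u₀ v₀) Y := by
    rw [← cutSize_add_weights]
    unfold cutSize
    exact Finset.sum_congr rfl fun a _ => Finset.sum_congr rfl fun b _ =>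
      w_eq_delw_add hne hw hsymm a b
  rw [cutSize_dw hne] at h1
  by_cases hu : u₀ ∈ Y <;> by_cases hv : v₀ ∈ Y <;> simp [hu, hv] at h1 <;> omega

lemma cutSize_delw_eq (hne : u₀ ≠ v₀) (hw : 0 < w u₀ v₀) (hsymm : ∀ u v, w u v = w v u)
    {Y : Finset V} (hu : u₀ ∈ Y) (hv : v₀ ∉ Y) :
    cutSize w Y = cutSize (delw w u₀ v₀) Y + 1 := by
  have h1 : cutSize w Y = cutSize (delw w u₀ v₀) Y + cutSize (dw u₀ v₀) Y := by
    rw [← cutSize_add_weights]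
    unfold cutSize
    exact Finset.sum_congr rfl fun a _ => Finset.sum_congr rfl fun b _ =>
      w_eq_delw_add hne hw hsymm a b
  rw [cutSize_dw hne] at h1
  simp [hu, hv] at h1
  omega

lemma bdry_delw_subset (Y : Finset V) : bdry (delw w u₀ v₀) Y ⊆ bdry w Y := by
  rintro e ⟨u, v, he, hu, hv, hpos⟩
  refine ⟨u, v, he, hu, hv, ?_⟩
  have : delw w u₀ v₀ u v ≤ w u v := Nat.sub_le _ _
  omega

lemma bdry_subset_delw (Y : Finset V) :
    bdry w Y ⊆ bdry (delw w u₀ v₀) Y ∪ {s(u₀, v₀)} := by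
  rintro e ⟨u, v, he, hu, hv, hpos⟩
  by_cases h : 0 < delw w u₀ v₀ u v
  · exact Or.inl ⟨u, v, he, hu, hv, h⟩
  · right
    have hd : 0 < dw u₀ v₀ u v := by unfold delw at h; omega
    unfold dw at hd
    split at hd
    · rename_i hc
      rcases hc with ⟨rfl, rfl⟩ | ⟨rfl, rfl⟩
      · exact he
      · rw [he]; exact Sym2.eq_swap
    · omega

end del

/-- Branch 1: an important `(S,T)`-cut containing `v₀` is an important `(S∪{v₀},T)`-cut. -/
lemma important_insert {w : V → V → ℕ} {S T X : Finset V} {v₀ : V}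
    (hX : IsImportantCut w S T X) (hv : v₀ ∈ X) :
    IsImportantCut w (insert v₀ S) T X := by
  obtain ⟨⟨hcut, hmin1, hmin2⟩, himp⟩ := hX
  refine ⟨⟨⟨Finset.insert_subset hv hcut.1, hcut.2⟩, ?_, hmin2⟩, ?_⟩
  · rintro ⟨V1', h1, h2, h3⟩
    exact hmin1 ⟨V1', (Finset.subset_insert v₀ S).trans h1, h2, h3⟩
  · rintro ⟨X', hcut', hss, hle⟩
    exact himp ⟨X', ⟨(Finset.subset_insert v₀ S).trans hcut'.1, hcut'.2⟩, hss, hle⟩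

/-- Branch 2: an important `(S,T)`-cut with `u₀` inside, `v₀` outside remains important
after deleting one copy of the edge `u₀v₀`. -/
lemma important_delw {w : V → V → ℕ} {S T X : Finset V} {u₀ v₀ : V}
    (hne : u₀ ≠ v₀) (hw0 : 0 < w u₀ v₀) (hsymm : ∀ u v, w u v = w v u)
    (hu : u₀ ∈ X) (hv : v₀ ∉ X) (hX : IsImportantCut w S T X) :
    IsImportantCut (delw w u₀ v₀) S T X := by
  obtain ⟨⟨hcut, hmin1, hmin2⟩, himp⟩ := hX
  have he₀ : s(u₀, v₀) ∈ bdry w X := ⟨u₀, v₀, rfl, hu, hv, hw0⟩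
  have htrans : ∀ Y : Finset V, bdry (delw w u₀ v₀) Y ⊆ bdry (delw w u₀ v₀) X →
      bdry w Y ⊆ bdry w X := by
    intro Y hY e heY
    rcases bdry_subset_delw Y heY with h | h
    · exact bdry_delw_subset X (hY h)
    · rwa [Set.mem_singleton_iff.mp h]
  refine ⟨⟨hcut, ?_, ?_⟩, ?_⟩
  · rintro ⟨V1', h1, h2, h3⟩
    exact hmin1 ⟨V1', h1, h2, htrans V1' h3⟩
  · rintro ⟨V2', h1, h2, h3⟩
    exact hmin2 ⟨V2', h1, h2, htrans V2' h3⟩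
  · rintro ⟨X', hcut', hss, hle⟩
    refine himp ⟨X', hcut', hss, ?_⟩
    have h1 := cutSize_delw_le hne hw0 hsymm X'
    have h2 := cutSize_delw_eq hne hw0 hsymm hu hv
    omega

/-- The key induction: at most `2^(2k-λ)` important cuts of size at most `k`. -/
lemma key_bound : ∀ n : ℕ, ∀ w : V → V → ℕ, (∀ u v, w u v = w v u) → (∀ v, w v v = 0) →
    ∀ S T : Finset V, S.Nonempty → T.Nonempty → Disjoint S T → ∀ k : ℕ,
    lam w S T ≤ k → 2 * k ≤ n + lam w S T →
    {X : Finset V | IsImportantCut w S T X ∧ cutSize w X ≤ k}.ncard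
      ≤ 2 ^ (2 * k - lam w S T) := by
  intro n
  induction n with
  | zero =>
    intro w hsymm hloop S T hS hT hST k hlk hn
    have hk0 : k = 0 ∧ lam w S T = 0 := by omega
    obtain ⟨R, hRcut, hRs⟩ := exists_lam_cut (w := w) hST
    have hsub : {X : Finset V | IsImportantCut w S T X ∧ cutSize w X ≤ k} ⊆ {R} := by
      intro X hX
      exact important_eq_R_of_lam_zero hRcut hRs hk0.2 hX.1
    calc _ ≤ ({R} : Set (Finset V)).ncard := Set.ncard_le_ncard hsub (Set.finite_singleton R)
      _ = 1 := Set.ncard_singleton R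
      _ ≤ 2 ^ (2 * k - lam w S T) := Nat.one_le_two_pow
  | succ n ih =>
    intro w hsymm hloop S T hS hT hST k hlk hn
    by_cases h0 : lam w S T = 0
    · obtain ⟨R, hRcut, hRs⟩ := exists_lam_cut (w := w) hST
      have hsub : {X : Finset V | IsImportantCut w S T X ∧ cutSize w X ≤ k} ⊆ {R} := by
        intro X hX
        exact important_eq_R_of_lam_zero hRcut hRs h0 hX.1
      calc _ ≤ ({R} : Set (Finset V)).ncard := Set.ncard_le_ncard hsub (Set.finite_singleton R)
        _ = 1 := Set.ncard_singleton R
        _ ≤ 2 ^ (2 * k - lam w S T) := Nat.one_le_two_pow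
    · -- λ ≥ 1 : pick an edge (u₀, v₀) leaving the MM cut R
      obtain ⟨R, hRcut, hRs, hRmax⟩ := exists_MM w hST
      have hRpos : 0 < cutSize w R := by omega
      have hedge : ∃ u ∈ R, ∃ v ∈ Rᶜ, 0 < w u v := by
        by_contra hc
        push_neg at hc
        have : cutSize w R = 0 :=
          Finset.sum_eq_zero fun u hu => Finset.sum_eq_zero fun v hv => by
            have := hc u hu v hv; omega
        omega
      obtain ⟨u₀, hu₀, v₀, hv₀c, hw0⟩ := hedge
      have hv₀R : v₀ ∉ R := Finset.mem_compl.mp hv₀c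
      have hne : u₀ ≠ v₀ := fun h => hv₀R (h ▸ hu₀)
      set S' := insert v₀ S with hS'
      set I := {X : Finset V | IsImportantCut w S T X ∧ cutSize w X ≤ k} with hI
      set I1 := {X : Finset V | IsImportantCut w S' T X ∧ cutSize w X ≤ k} with hI1
      set I2 := {X : Finset V | IsImportantCut (delw w u₀ v₀) S T X ∧ cutSize (delw w u₀ v₀) X ≤ k - 1} with hI2
      have hk1 : 1 ≤ k := by omega
      have hsplit : I ⊆ I1 ∪ I2 := by
        rintro X ⟨hX, hXk⟩
        by_cases hvX : v₀ ∈ X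
        · exact Or.inl ⟨important_insert hX hvX, hXk⟩
        · right
          have hRX : R ⊆ X := MM_subset_important hRcut hRs hX
          have huX : u₀ ∈ X := hRX hu₀
          refine ⟨important_delw hne hw0 hsymm huX hvX hX, ?_⟩
          have := cutSize_delw_eq hne hw0 hsymm huX hvX
          omega
      have hb1 : I1.ncard ≤ 2 ^ (2 * k - lam w S T - 1) := by
        by_cases hvT : v₀ ∈ T
        · have : I1 = ∅ := by
            rw [Set.eq_empty_iff_forall_notMem]
            rintro X ⟨hX, -⟩
            have h1 : v₀ ∈ X := hX.1.1.1 (Finset.mem_insert_self v₀ S)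
            have h2 : v₀ ∈ Xᶜ := hX.1.1.2 hvT
            exact Finset.mem_compl.mp h2 h1
          simp [this]
        · have hST' : Disjoint S' T := by
            rw [Finset.disjoint_left]
            intro x hx hxT
            rcases Finset.mem_insert.mp hx with rfl | hxS
            · exact hvT hxT
            · exact Finset.disjoint_left.mp hST hxS hxT
          by_cases hl1 : lam w S' T ≤ k
          · have hge : lam w S T + 1 ≤ lam w S' T := by
              apply lam_lower hST'
              intro U hU
              have hUcut : IsCut S T U := ⟨(Finset.subset_insert v₀ S).trans hU.1, hU.2⟩
              have h1 : lam w S T ≤ cutSize w U := lam_le hUcut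
              by_contra hc
              push_neg at hc
              have hUlam : cutSize w U = lam w S T := by omega
              have : v₀ ∈ R := hRmax U hUcut hUlam (hU.1 (Finset.mem_insert_self v₀ S))
              exact hv₀R this
            have hres := ih w hsymm hloop S' T (Finset.insert_nonempty v₀ S) hT hST' k hl1
              (by omega)
            calc I1.ncard ≤ 2 ^ (2 * k - lam w S' T) := hres
              _ ≤ 2 ^ (2 * k - lam w S T - 1) :=
                  Nat.pow_le_pow_right (by norm_num) (by omega)
          · have : I1 = ∅ := by
              rw [Set.eq_empty_iff_forall_notMem]
              rintro X ⟨hX, hXk⟩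
              have := lam_le (w := w) hX.1.1
              omega
            simp [this]
      have hb2 : I2.ncard ≤ 2 ^ (2 * k - lam w S T - 1) := by
        have hdsymm : ∀ u v, (delw w u₀ v₀) u v = (delw w u₀ v₀) v u := delw_symm hsymm
        have hdloop : ∀ v, (delw w u₀ v₀) v v = 0 := delw_loop hloop
        have hge : lam w S T ≤ lam (delw w u₀ v₀) S T + 1 := by
          obtain ⟨U, hUcut, hUs⟩ := exists_lam_cut (w := (delw w u₀ v₀)) hST
          have h1 : lam w S T ≤ cutSize w U := lam_le hUcut
          have h2 := cutSize_delw_le hne hw0 hsymm U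
          omega
        by_cases hl2 : lam (delw w u₀ v₀) S T ≤ k - 1
        · have hres := ih (delw w u₀ v₀) hdsymm hdloop S T hS hT hST (k - 1) hl2 (by omega)
          calc I2.ncard ≤ 2 ^ (2 * (k - 1) - lam (delw w u₀ v₀) S T) := hres
            _ ≤ 2 ^ (2 * k - lam w S T - 1) :=
                Nat.pow_le_pow_right (by norm_num) (by omega)
        · have : I2 = ∅ := by
            rw [Set.eq_empty_iff_forall_notMem]
            rintro X ⟨hX, hXk⟩
            have := lam_le (w := (delw w u₀ v₀)) hX.1.1
            omega
          simp [this]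
      have hfin : (I1 ∪ I2).Finite := Set.toFinite _
      obtain ⟨m, hm⟩ : ∃ m, 2 * k - lam w S T = m + 1 :=
        ⟨2 * k - lam w S T - 1, by omega⟩
      have hm2 : 2 * k - lam w S T - 1 = m := by omega
      rw [hm2] at hb1 hb2
      calc I.ncard ≤ (I1 ∪ I2).ncard := Set.ncard_le_ncard hsplit hfin
        _ ≤ I1.ncard + I2.ncard := Set.ncard_union_le I1 I2
        _ ≤ 2 ^ m + 2 ^ m := by omega
        _ = 2 ^ (2 * k - lam w S T) := by rw [hm, pow_succ]; omega


/-- there are at most `4^k` important `(S,T)`-cuts of size at most `k`. -/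
theorem important_cuts_card_le (w : V → V → ℕ)
    (hsymm : ∀ u v, w u v = w v u) (hloop : ∀ v, w v v = 0)
    (S T : Finset V) (hS : S.Nonempty) (hT : T.Nonempty) (hST : Disjoint S T)
    (k : ℕ) :
    {X : Finset V | IsImportantCut w S T X ∧ cutSize w X ≤ k}.ncard ≤ 4 ^ k := by
  by_cases hlk : lam w S T ≤ k
  · have h := key_bound (2 * k) w hsymm hloop S T hS hT hST k hlk (by omega)
    have h4 : (4 : ℕ) ^ k = 2 ^ (2 * k) := by
      rw [pow_mul]; norm_num
    calc _ ≤ 2 ^ (2 * k - lam w S T) := h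
      _ ≤ 2 ^ (2 * k) := Nat.pow_le_pow_right (by norm_num) (by omega)
      _ = 4 ^ k := h4.symm
  · have : {X : Finset V | IsImportantCut w S T X ∧ cutSize w X ≤ k} = ∅ := by
      rw [Set.eq_empty_iff_forall_notMem]
      rintro X ⟨hX, hXk⟩
      have := lam_le (w := w) hX.1.1
      omega
    simp [this]
end

section
/- Let I = (G, A, B, u_A, u_B, k) be an easy instance of bounded-degree cut such that deg(v; A) ≤ u_A(v) for every v ∈ Z_A ∩ A and deg(v; B) ≤ u_B(v) for every v ∈ Z_B ∩ B. Then every (A,B)-cut (V1, V2) satisfies deg(v; V1) ≤ u_A(v) for all v ∈ V1 and deg(v; V2) ≤ u_B(v) for all v ∈ V2; consequently, I is feasible if and only if there exists a minimal (A,B)-cut of cut-size at most k. -/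
open Finset

variable {V : Type*} [Fintype V] [DecidableEq V]

/-- in an easy instance with no violated terminal, every `(A,B)`-cut satisfies
the degree constraints; hence feasibility reduces to a minimal cut of size `≤ k`. -/
theorem easy_instance_feasibility (w : V → V → ℕ)
    (hsymm : ∀ u v, w u v = w v u) (hloop : ∀ v, w v v = 0)
    (A B : Finset V) (uA uB : V → ℕ) (k : ℕ)
    (hA : A.Nonempty) (hB : B.Nonempty) (hAB : Disjoint A B)
    (heasy : EasyInstance w uA uB A B)
    (hA' : ∀ v ∈ unsat w uA ∩ A, degIn w v A ≤ uA v)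
    (hB' : ∀ v ∈ unsat w uB ∩ B, degIn w v B ≤ uB v) :
    (∀ V1 : Finset V, IsCut A B V1 →
      (∀ v ∈ V1, degIn w v V1 ≤ uA v) ∧ (∀ v ∈ V1ᶜ, degIn w v V1ᶜ ≤ uB v)) ∧
    (Feasible w uA uB k A B ↔
      ∃ V1 : Finset V, IsMinimalCut w A B V1 ∧ cutSize w V1 ≤ k) := by
  have hdeg : ∀ (X : Finset V) (v : V), degIn w v X ≤ deg w v := by
    intro X v
    exact Finset.sum_le_sum_of_subset (Finset.subset_univ _)
  have key : ∀ V1 : Finset V, IsCut A B V1 →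
      (∀ v ∈ V1, degIn w v V1 ≤ uA v) ∧ (∀ v ∈ V1ᶜ, degIn w v V1ᶜ ≤ uB v) := by
    rintro V1 ⟨hAV, hBV⟩
    constructor
    · intro v hv
      by_cases hus : v ∈ unsat w uA
      · have hvAB : v ∈ A ∪ B := heasy.1 (Finset.mem_union_left _ hus)
        have hvA : v ∈ A := by
          rcases Finset.mem_union.mp hvAB with h | h
          · exact h
          · exact absurd hv (Finset.mem_compl.mp (hBV h))
        have h1 : degIn w v V1 ≤ degIn w v A := by
          apply Finset.sum_le_sum_of_ne_zero
          intro u hu' hne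
          have hune : u ≠ v := Finset.ne_of_mem_erase hu'
          have huV1 : u ∈ V1 := Finset.mem_of_mem_erase hu'
          have huA : u ∈ A := by
            by_cases hcase : u ∈ unsat w uA ∩ A
            · exact (Finset.mem_inter.mp hcase).2
            · have hnb : u ∈ nbhd w (unsat w uA ∩ A) := by
                simp only [nbhd, Finset.mem_filter, Finset.mem_univ, true_and]
                exact ⟨hcase, v, Finset.mem_inter.mpr ⟨hus, hvA⟩, by rw [hsymm]; omega⟩
              rcases Finset.mem_union.mp (heasy.2.1 hnb) with h | h
              · exact h
              · exact absurd huV1 (Finset.mem_compl.mp (hBV h))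
          exact Finset.mem_erase.mpr ⟨hune, huA⟩
        exact h1.trans (hA' v (Finset.mem_inter.mpr ⟨hus, hvA⟩))
      · have hle : deg w v ≤ uA v := by
          simp only [unsat, Finset.mem_filter, Finset.mem_univ, true_and, not_lt] at hus
          exact hus
        exact (hdeg V1 v).trans hle
    · intro v hv
      by_cases hus : v ∈ unsat w uB
      · have hvAB : v ∈ A ∪ B := heasy.1 (Finset.mem_union_right _ hus)
        have hvB : v ∈ B := by
          rcases Finset.mem_union.mp hvAB with h | h
          · exact absurd (hAV h) (Finset.mem_compl.mp hv)
          · exact h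
        have h1 : degIn w v V1ᶜ ≤ degIn w v B := by
          apply Finset.sum_le_sum_of_ne_zero
          intro u hu' hne
          have hune : u ≠ v := Finset.ne_of_mem_erase hu'
          have huV1 : u ∈ V1ᶜ := Finset.mem_of_mem_erase hu'
          have huB : u ∈ B := by
            by_cases hcase : u ∈ unsat w uB ∩ B
            · exact (Finset.mem_inter.mp hcase).2
            · have hnb : u ∈ nbhd w (unsat w uB ∩ B) := by
                simp only [nbhd, Finset.mem_filter, Finset.mem_univ, true_and]
                exact ⟨hcase, v, Finset.mem_inter.mpr ⟨hus, hvB⟩, by rw [hsymm]; omega⟩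
              rcases Finset.mem_union.mp (heasy.2.2 hnb) with h | h
              · exact absurd (hAV h) (Finset.mem_compl.mp huV1)
              · exact h
          exact Finset.mem_erase.mpr ⟨hune, huB⟩
        exact h1.trans (hB' v (Finset.mem_inter.mpr ⟨hus, hvB⟩))
      · have hle : deg w v ≤ uB v := by
          simp only [unsat, Finset.mem_filter, Finset.mem_univ, true_and, not_lt] at hus
          exact hus
        exact (hdeg V1ᶜ v).trans hle
  refine ⟨key, ?_⟩
  constructor
  · rintro ⟨VA, hmin, hsize, _⟩
    exact ⟨VA, hmin, hsize⟩
  · rintro ⟨V1, hmin, hsize⟩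
    exact ⟨V1, hmin, hsize, (key V1 hmin.1).1, (key V1 hmin.1).2⟩
end

section
/- Let G be a multigraph, u_A : V → ℕ, and let (V1, V2) be a pair with V2 = V ∖ V1 such that deg(v; V1) ≤ u_A(v) for every v ∈ V1. Then the number of vertices v ∈ V1 with deg(v) > u_A(v) is at most the cut-size Σ_{u ∈ V1, v ∈ V2} w(u,v). In particular, for a feasible (A,B)-cut of an instance of bounded-degree cut with parameter k, the set Z_A ∩ V1 has at most k elements. -/
open Finset

variable {V : Type*} [Fintype V] [DecidableEq V]

/-- if the degree constraint holds on `V1`, then the number of vertices of `V1`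
with `deg(v) > u_A(v)` is at most the cut-size; in particular `|Z_A ∩ V1| ≤ k` for a
feasible cut. -/
theorem unsat_in_V1_card_le (w : V → V → ℕ)
    (hsymm : ∀ u v, w u v = w v u) (hloop : ∀ v, w v v = 0)
    (uA : V → ℕ) (V1 : Finset V)
    (hdeg : ∀ v ∈ V1, degIn w v V1 ≤ uA v) :
    (unsat w uA ∩ V1).card ≤ cutSize w V1 ∧
    ∀ (uB : V → ℕ) (k : ℕ) (A B : Finset V), A.Nonempty → B.Nonempty → Disjoint A B →
      FeasibleCut w uA uB k A B V1 → (unsat w uA ∩ V1).card ≤ k := by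
  have hmain : (unsat w uA ∩ V1).card ≤ cutSize w V1 := by
    have h1 : ∀ u ∈ unsat w uA ∩ V1, 1 ≤ ∑ v ∈ V1ᶜ, w u v := by
      intro u hu
      simp only [mem_inter, unsat, mem_filter, mem_univ, true_and] at hu
      obtain ⟨hlt, huV1⟩ := hu
      by_contra h
      push_neg at h
      interval_cases hz : (∑ v ∈ V1ᶜ, w u v)
      have hsplit : deg w u = degIn w u V1 + ∑ v ∈ V1ᶜ, w u v := by
        rw [degIn, Finset.sum_erase _ (by rw [hloop])]
        rw [deg, ← Finset.sum_add_sum_compl V1]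
      have := hdeg u huV1
      omega
    calc (unsat w uA ∩ V1).card = ∑ u ∈ unsat w uA ∩ V1, 1 := by simp
      _ ≤ ∑ u ∈ unsat w uA ∩ V1, ∑ v ∈ V1ᶜ, w u v := Finset.sum_le_sum h1
      _ ≤ ∑ u ∈ V1, ∑ v ∈ V1ᶜ, w u v :=
          Finset.sum_le_sum_of_subset (Finset.inter_subset_right)
      _ = cutSize w V1 := rfl
  refine ⟨hmain, fun uB k A B _ _ _ hfeas => ?_⟩
  exact hmain.trans hfeas.2.1
end

section
/- Let I = (G, A, B, u_A, u_B, k) be an instance of bounded-degree cut and let π = (V1, V2) be a feasible (A,B)-cut of I. Then the instance (G, A_π, B_π, u_A, u_B, k) is feasible; indeed, π itself is a feasible (A_π, B_π)-cut of this instance. -/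
open Finset

variable {V : Type*} [Fintype V] [DecidableEq V]

/-- if `π = (V1,V2)` is a feasible `(A,B)`-cut, then `π` is itself a feasible
`(A_π, B_π)`-cut, so the instance `(G, A_π, B_π, u_A, u_B, k)` is feasible. -/
theorem Api_Bpi_feasible (w : V → V → ℕ)
    (hsymm : ∀ u v, w u v = w v u) (hloop : ∀ v, w v v = 0)
    (A B : Finset V) (uA uB : V → ℕ) (k : ℕ)
    (hA : A.Nonempty) (hB : B.Nonempty) (hAB : Disjoint A B)
    (V1 : Finset V) (hfeas : FeasibleCut w uA uB k A B V1) :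
    FeasibleCut w uA uB k (Api w uA uB A V1) (Bpi w uA uB B V1) V1 ∧
    Feasible w uA uB k (Api w uA uB A V1) (Bpi w uA uB B V1) := by
  obtain ⟨⟨⟨hAV1, hBV1⟩, hmin1, hmin2⟩, hsize, hdA, hdB⟩ := hfeas
  have hApi : Api w uA uB A V1 ⊆ V1 := by
    intro x hx
    simp only [Api, mem_union, mem_inter] at hx
    rcases hx with ((((h | h) | h) | h) | h)
    · exact hAV1 h
    all_goals exact h.2
  have hBpi : Bpi w uA uB B V1 ⊆ V1ᶜ := by
    intro x hx
    simp only [Bpi, mem_union, mem_inter] at hx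
    rcases hx with ((((h | h) | h) | h) | h)
    · exact hBV1 h
    all_goals exact h.2
  have hA' : A ⊆ Api w uA uB A V1 := by
    intro x hx; simp only [Api, mem_union]; tauto
  have hB' : B ⊆ Bpi w uA uB B V1 := by
    intro x hx; simp only [Bpi, mem_union]; tauto
  have hfc : FeasibleCut w uA uB k (Api w uA uB A V1) (Bpi w uA uB B V1) V1 := by
    refine ⟨⟨⟨hApi, hBpi⟩, ?_, ?_⟩, hsize, hdA, hdB⟩
    · rintro ⟨V1', h1, h2, h3⟩
      exact hmin1 ⟨V1', hA'.trans h1, h2, h3⟩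
    · rintro ⟨V2', h1, h2, h3⟩
      exact hmin2 ⟨V2', hB'.trans h1, h2, h3⟩
  exact ⟨hfc, V1, hfc⟩
end

section
/- Let G be a multigraph with edge-multiplicity function w, let A, B, C ⊆ V with A, B nonempty and disjoint, let k, ℓ ∈ ℕ, and fix b ∈ B. Let H be the multigraph on V with multiplicity function w' where w'(u,v) = w(u,v) + 1 if {u,v} = {b,c} for some c ∈ C ∖ {b}, and w'(u,v) = w(u,v) otherwise. Then for every minimal (A,B)-cut (V1, V2) of G with cut-size in G at most k and |C ∩ V1| ≤ ℓ: (V1, V2) is an (A ∪ (C ∩ V1), B)-cut in H whose cut-size in H equals its cut-size in G plus |C ∩ V1|; consequently, the minimum (A ∪ (C ∩ V1), B)-cut size in H is at most k + ℓ, and C ∩ V1 is contained in N_H(b) ∩ S for the MM (A ∪ (C ∩ V1), B)-cut (S, T) of H. -/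
open Finset

variable {V : Type*} [Fintype V] [DecidableEq V]

/-- properties of the auxiliary multigraph `H` obtained by adding one extra
parallel edge between `b ∈ B` and each vertex of `C ∖ {b}`. -/
theorem auxiliary_graph_properties (w : V → V → ℕ)
    (hsymm : ∀ u v, w u v = w v u) (hloop : ∀ v, w v v = 0)
    (A B C : Finset V) (hA : A.Nonempty) (hB : B.Nonempty) (hAB : Disjoint A B)
    (k l : ℕ) (b : V) (hb : b ∈ B)
    (w' : V → V → ℕ)
    (hw' : ∀ u v, w' u v = w u v +
      (if (u = b ∧ v ∈ C ∧ v ≠ b) ∨ (v = b ∧ u ∈ C ∧ u ≠ b) then 1 else 0))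
    (V1 : Finset V) (hmin : IsMinimalCut w A B V1) (hsize : cutSize w V1 ≤ k)
    (hC : (C ∩ V1).card ≤ l) :
    IsCut (A ∪ (C ∩ V1)) B V1 ∧
    cutSize w' V1 = cutSize w V1 + (C ∩ V1).card ∧
    (∃ U : Finset V, IsCut (A ∪ (C ∩ V1)) B U ∧ cutSize w' U ≤ k + l) ∧
    (∀ S : Finset V, IsMMCut w' (A ∪ (C ∩ V1)) B S →
      C ∩ V1 ⊆ nbhd w' {b} ∩ S) := by
  obtain ⟨⟨hAV1, hBV1⟩, -, -⟩ := hmin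
  have hbV1 : b ∉ V1 := by
    have := hBV1 hb
    simpa using this
  have hcut : IsCut (A ∪ (C ∩ V1)) B V1 :=
    ⟨union_subset hAV1 inter_subset_right, hBV1⟩
  have hsize' : cutSize w' V1 = cutSize w V1 + (C ∩ V1).card := by
    unfold cutSize
    have hsum : ∀ u ∈ V1, ∑ v ∈ V1ᶜ, w' u v
        = (∑ v ∈ V1ᶜ, w u v) + (if u ∈ C then 1 else 0) := by
      intro u hu
      have hub : u ≠ b := fun h => hbV1 (h ▸ hu)
      have hrw : ∀ v ∈ V1ᶜ, w' u v = w u v + (if v = b ∧ u ∈ C then 1 else 0) := by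
        intro v hv
        rw [hw' u v]
        congr 1
        by_cases hvb : v = b
        · subst hvb
          by_cases huC : u ∈ C <;> simp [hub, huC]
        · simp [hvb, hub]
      rw [Finset.sum_congr rfl hrw, Finset.sum_add_distrib]
      congr 1
      by_cases huC : u ∈ C
      · simp only [huC, and_true]
        rw [Finset.sum_ite_eq' V1ᶜ b (fun _ => 1)]
        simp [hbV1]
      · simp [huC]
    rw [Finset.sum_congr rfl hsum, Finset.sum_add_distrib]
    congr 1
    rw [Finset.sum_ite_mem]
    simp [Finset.inter_comm]
  refine ⟨hcut, hsize', ⟨V1, hcut, ?_⟩, ?_⟩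
  · rw [hsize']
    exact Nat.add_le_add hsize hC
  · intro S hS c hc
    obtain ⟨hcC, hcV1⟩ := Finset.mem_inter.mp hc
    have hcS : c ∈ S := hS.1.1.1 (Finset.mem_union_right _ hc)
    have hcb : c ≠ b := fun h => hbV1 (h ▸ hcV1)
    have hpos : 0 < w' c b := by
      rw [hw']
      have : (c = b ∧ b ∈ C ∧ b ≠ b) ∨ (b = b ∧ c ∈ C ∧ c ≠ b) :=
        Or.inr ⟨rfl, hcC, hcb⟩
      simp [hcC, hcb]
    refine Finset.mem_inter.mpr ⟨?_, hcS⟩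
    simp only [nbhd, Finset.mem_filter, Finset.mem_univ, true_and,
      Finset.mem_singleton]
    exact ⟨hcb, b, rfl, hpos⟩
end
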